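/- arXiv:0906.3466 — 3 statements merged into one kernel-verified Lean document; each statement's English description precedes it below -/
import Mathlib

section
/- (Lemma 1.1(i).) Assume K is an infinite field. If every invariant polynomial is constant, i.e. every semi-invariant f ∈ MvPolynomial (Fin m) K of weight 0 equals the constant polynomial MvPolynomial.C (MvPolynomial.coeff 0 f), then there exists λ : Fin r → ℤ such that all the torus weights on 𝕍 are strictly positive against λ: for every i : Fin m, ∑ j, w i j * λ j > 0. -/
/-!
Gordan's alternative, proved over any ordered field by eliminating one coordinate at a time
(Fourier–Motzkin), says that either some `λ ∈ ℚ^r` pairs positively with every weight `w i`, or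
some nonzero `c ≥ 0` in `ℚ^m` satisfies `∑ i, c i • w i = 0`. Clearing denominators, the first
case gives an integral `λ`. In the second, `c` becomes a nonzero exponent vector `a ∈ ℕ^m` with
`∑ i, a i • w i = 0`, and the monomial `x^a` is then an invariant that is not constant.
-/

open Matrix MvPolynomial

section FourierMotzkin

variable {F ι : Type*} [Field F] [LinearOrder F] [DecidableEq ι]

/-- The nonnegative row combinations that Fourier–Motzkin elimination uses to eliminate a column
`b`: every row of this matrix is orthogonal to `b`. -/
def fourierMotzkin (b : ι → F) : Matrix ({i // b i = 0} ⊕ {p // 0 < b p} × {n // b n < 0}) ι F :=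
  Matrix.of fun
    | .inl i => Pi.single (i : ι) 1
    | .inr (p, n) => Pi.single (n : ι) (b p) + Pi.single (p : ι) (-b n)

section Fintype

variable [Fintype ι]

@[simp]
theorem fourierMotzkin_mulVec_inl (b y : ι → F) (i : {i // b i = 0}) :
    (fourierMotzkin b *ᵥ y) (.inl i) = y i := by
  simp [fourierMotzkin, mulVec]

@[simp]
theorem fourierMotzkin_mulVec_inr (b y : ι → F) (p : {p // 0 < b p}) (n : {n // b n < 0}) :
    (fourierMotzkin b *ᵥ y) (.inr (p, n)) = b p * y n - b n * y p := by
  simp [fourierMotzkin, mulVec, dotProduct, add_mul, Finset.sum_add_distrib, Pi.single_apply]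
  ring

theorem fourierMotzkin_mulVec_self (b : ι → F) : fourierMotzkin b *ᵥ b = 0 := by
  ext (i | ⟨p, n⟩)
  · simpa using i.2
  · simp [mul_comm]

end Fintype

variable [IsStrictOrderedRing F]

theorem fourierMotzkin_nonneg (b : ι → F) (k) : 0 ≤ fourierMotzkin b k := by
  rcases k with i | ⟨p, n⟩
  · exact Pi.single_nonneg.2 zero_le_one
  · exact add_nonneg (Pi.single_nonneg.2 p.2.le) (Pi.single_nonneg.2 (neg_nonneg.2 n.2.le))

theorem exists_fourierMotzkin_pos (b : ι → F) (k) : ∃ i, 0 < fourierMotzkin b k i := by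
  rcases k with i | ⟨p, n⟩
  · exact ⟨i, by simp [fourierMotzkin]⟩
  · refine ⟨n, ?_⟩
    have hp := p.2
    have hn := n.2
    simp only [fourierMotzkin, of_apply, Pi.add_apply, Pi.single_eq_same, Pi.single_apply]
    split_ifs <;> linarith

theorem exists_pos_mul_add_of_fourierMotzkin_mulVec_pos [Fintype ι] {b s : ι → F}
    (hs : ∀ k, 0 < (fourierMotzkin b *ᵥ s) k) : ∃ z, ∀ i, 0 < b i * z + s i := by
  obtain ⟨z, hlo, hhi⟩ := Finset.exists_between'
      ((Finset.univ.filter (0 < b ·)).image fun p => -s p / b p)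
      ((Finset.univ.filter (b · < 0)).image fun n => -s n / b n) <| by
    simp only [Finset.mem_image, Finset.mem_filter, Finset.mem_univ, true_and]
    rintro _ ⟨p, hp, rfl⟩ _ ⟨n, hn, rfl⟩
    rw [← neg_div_neg_eq (-s n), div_lt_div_iff₀ hp (neg_pos.2 hn)]
    have hpn := hs (.inr (⟨p, hp⟩, ⟨n, hn⟩))
    rw [fourierMotzkin_mulVec_inr] at hpn
    linarith
  simp only [Finset.mem_image, Finset.mem_filter, Finset.mem_univ, true_and,
    forall_exists_index, and_imp, forall_apply_eq_imp_iff₂] at hlo hhi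
  refine ⟨z, fun i => ?_⟩
  rcases lt_trichotomy (b i) 0 with hi | hi | hi
  · linarith [(lt_div_iff_of_neg hi).1 (hhi i hi)]
  · simpa [hi] using hs (.inl ⟨i, hi⟩)
  · linarith [(div_lt_iff₀ hi).1 (hlo i hi)]

end FourierMotzkin

section Gordan

variable {F : Type*} [Field F] [LinearOrder F] [IsStrictOrderedRing F]

theorem exists_nonneg_vecMul_eq_zero_of_mul {ι κ σ : Type*} [Fintype ι] [Fintype κ]
    (G : Matrix κ ι F) (A : Matrix ι σ F) (hG : ∀ k, 0 ≤ G k) (hG' : ∀ k, ∃ i, 0 < G k i)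
    {c : κ → F} (hc : 0 ≤ c) (hc' : c ≠ 0) (hcGA : c ᵥ* (G * A) = 0) :
    ∃ d : ι → F, 0 ≤ d ∧ d ≠ 0 ∧ d ᵥ* A = 0 := by
  obtain ⟨k, hk⟩ := Function.ne_iff.mp hc'
  obtain ⟨i, hi⟩ := hG' k
  have hterm : ∀ i, ∀ k ∈ Finset.univ, 0 ≤ c k * G k i := fun i k _ => mul_nonneg (hc k) (hG k i)
  refine ⟨c ᵥ* G, fun i => Finset.sum_nonneg (hterm i), Function.ne_iff.mpr ⟨i, ?_⟩,
    by rw [vecMul_vecMul, hcGA]⟩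
  exact (Finset.sum_pos' (hterm i) ⟨k, Finset.mem_univ _, mul_pos ((hc k).lt_of_ne' hk) hi⟩).ne'

theorem gordan_alternative {ι : Type*} [Fintype ι] {n : ℕ} (A : Matrix ι (Fin n) F) :
    (∃ x, ∀ i, 0 < (A *ᵥ x) i) ∨ ∃ c : ι → F, 0 ≤ c ∧ c ≠ 0 ∧ c ᵥ* A = 0 := by
  induction n generalizing ι with
  | zero =>
    cases isEmpty_or_nonempty ι
    · exact .inl ⟨0, isEmptyElim⟩
    · exact .inr ⟨1, zero_le_one, one_ne_zero, funext fun j => j.elim0⟩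
  | succ n ih =>
    classical
    let b i := A i 0
    let G := fourierMotzkin b
    have hGA : ∀ k, (G * A) k 0 = 0 := fun k => congrFun (fourierMotzkin_mulVec_self b) k
    have hcons : ∀ z μ, (G * A) *ᵥ vecCons z μ = (G * A).submatrix id Fin.succ *ᵥ μ := by
      intro z μ
      ext k
      simp [mulVec, dotProduct_cons, vecHead, vecTail, Function.comp_def, hGA]
    rcases ih ((G * A).submatrix id Fin.succ) with ⟨μ, hμ⟩ | ⟨c, hc, hc', hcA⟩
    · obtain ⟨z, hz⟩ := exists_pos_mul_add_of_fourierMotzkin_mulVec_pos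
        (s := A *ᵥ vecCons 0 μ) fun k => by rw [mulVec_mulVec, hcons]; exact hμ k
      refine .inl ⟨vecCons z μ, fun i => ?_⟩
      convert hz i using 1
      simp [b, mulVec, dotProduct_cons, vecHead]
    · refine .inr (exists_nonneg_vecMul_eq_zero_of_mul G A (fourierMotzkin_nonneg b)
        (exists_fourierMotzkin_pos b) hc hc' ?_)
      ext j
      refine Fin.cases ?_ (fun j => congrFun hcA j) j
      simp [vecMul, dotProduct, hGA]

end Gordan

theorem exists_pos_nat_mul_eq_intCast {ι : Type*} [Fintype ι] (q : ι → ℚ) :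
    ∃ N : ℕ, 0 < N ∧ ∃ z : ι → ℤ, ∀ i, (z i : ℚ) = N * q i := by
  have hden (i : ι) : (q i).den ∣ ∏ j, (q j).den := Finset.dvd_prod_of_mem _ (Finset.mem_univ i)
  choose k hk using hden
  refine ⟨∏ j, (q j).den, Finset.prod_pos fun j _ => (q j).pos, fun i => k i * (q i).num,
    fun i => ?_⟩
  dsimp only
  rw [hk i]
  push_cast
  rw [← Rat.mul_den_eq_num]
  ring

theorem gordan_alternative_int {ι : Type*} [Fintype ι] {n : ℕ} (A : Matrix ι (Fin n) ℤ) :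
    (∃ x, ∀ i, 0 < (A *ᵥ x) i) ∨ ∃ c : ι → ℕ, c ≠ 0 ∧ (fun i => (c i : ℤ)) ᵥ* A = 0 := by
  let toRat := Int.castRingHom ℚ
  rcases gordan_alternative (A.map toRat) with ⟨q, hq⟩ | ⟨c, hc, hc', hcA⟩
  · obtain ⟨N, hN, x, hx⟩ := exists_pos_nat_mul_eq_intCast q
    refine .inl ⟨x, fun i => ?_⟩
    have hxq : toRat ∘ x = (N : ℚ) • q := funext fun i => by simp [toRat, hx]
    have hAx := toRat.map_mulVec A x i
    rw [hxq, mulVec_smul, Pi.smul_apply, smul_eq_mul] at hAx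
    have hpos : (0 : ℚ) < toRat ((A *ᵥ x) i) := hAx ▸ mul_pos (Nat.cast_pos.2 hN) (hq i)
    simpa [toRat] using hpos
  · obtain ⟨N, hN, z, hz⟩ := exists_pos_nat_mul_eq_intCast c
    have hz0 (i : ι) : 0 ≤ z i := by
      have h := mul_nonneg N.cast_nonneg (hc i)
      rw [← hz i] at h
      exact Int.cast_nonneg_iff.1 h
    lift z to ι → ℕ using hz0
    refine .inr ⟨z, fun hzero => hc' (funext fun i => ?_), funext fun j => toRat.injective_int ?_⟩
    · simpa [hzero, hN.ne'] using (hz i).symm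
    · have hzc : toRat ∘ (fun i => (z i : ℤ)) = (N : ℚ) • c :=
        funext fun i => by simpa [toRat] using hz i
      rw [toRat.map_vecMul, hzc, smul_vecMul, hcA, smul_zero]
      simp

def IsSemiInvariant {R σ τ : Type*} [CommSemiring R] [Fintype τ] (w : Matrix σ τ ℤ) (ε : τ → ℤ)
    (f : MvPolynomial σ R) : Prop :=
  ∀ (t : τ → Rˣ) (x : σ → R),
    eval (fun i => ((∏ j, t j ^ w i j : Rˣ) : R) * x i) f = ((∏ j, t j ^ ε j : Rˣ) : R) * eval x f

theorem Finset.prod_zpow_eq_zpow_sum {G ι : Type*} [CommGroup G] (s : Finset ι) (x : G)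
    (f : ι → ℤ) : ∏ i ∈ s, x ^ f i = x ^ ∑ i ∈ s, f i := by
  induction s using Finset.cons_induction with
  | empty => simp
  | cons a s ha ih => rw [Finset.prod_cons, Finset.sum_cons, ih, _root_.zpow_add]

theorem prod_pow_prod_zpow_eq_prod_zpow_vecMul {G σ τ : Type*} [CommGroup G] [Fintype σ] [Fintype τ] (t : τ → G)
    (w : Matrix σ τ ℤ) (a : σ → ℕ) :
    ∏ i, (∏ j, t j ^ w i j) ^ a i = ∏ j, t j ^ ((fun i => (a i : ℤ)) ᵥ* w) j := by
  simp_rw [← Finset.prod_pow, ← zpow_natCast, ← _root_.zpow_mul]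
  rw [Finset.prod_comm]
  refine Finset.prod_congr rfl fun j _ => ?_
  rw [Finset.prod_zpow_eq_zpow_sum]
  simp [vecMul, dotProduct, mul_comm]

theorem isSemiInvariant_monomial {R σ τ : Type*} [CommSemiring R] [Fintype σ] [Fintype τ]
    (w : Matrix σ τ ℤ) (s : σ →₀ ℕ) (a : R) :
    IsSemiInvariant w ((fun i => (s i : ℤ)) ᵥ* w) (monomial s a) := by
  intro t x
  rw [eval_monomial, eval_monomial, Finsupp.prod_fintype _ _ (fun _ => pow_zero _),
    Finsupp.prod_fintype _ _ (fun _ => pow_zero _), ← prod_pow_prod_zpow_eq_prod_zpow_vecMul]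
  simp only [mul_pow, Finset.prod_mul_distrib]
  push_cast
  ring

theorem MvPolynomial.monomial_ne_C_coeff_zero {R σ : Type*} [CommSemiring R] {s : σ →₀ ℕ}
    (hs : s ≠ 0) {a : R} (ha : a ≠ 0) : monomial s a ≠ C (coeff 0 (monomial s a)) := by
  classical
  rw [coeff_monomial, if_neg hs, map_zero, Ne, monomial_eq_zero]
  exact ha

theorem exists_positive_one_parameter_subgroup_general (K : Type*) [Field K]
    (m r : ℕ) (w : Fin m → (Fin r → ℤ))
    (hinv : ∀ f : MvPolynomial (Fin m) K,
      (∀ (t : Fin r → Kˣ) (x : Fin m → K),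
        MvPolynomial.eval (fun i => ((∏ j, (t j) ^ (w i j) : Kˣ) : K) * x i) f
          = ((∏ j, (t j) ^ ((0 : Fin r → ℤ) j) : Kˣ) : K) * MvPolynomial.eval x f) →
      f = MvPolynomial.C (MvPolynomial.coeff 0 f)) :
    ∃ lam : Fin r → ℤ, ∀ i : Fin m, (∑ j, w i j * lam j) > 0 := by
  obtain ⟨lam, hlam⟩ | ⟨c, hc, hcw⟩ := gordan_alternative_int w
  · exact ⟨lam, hlam⟩
  · let s := Finsupp.equivFunOnFinite.symm c
    have hs : s ≠ 0 := fun h => hc (by simpa [s] using congrArg (⇑) h)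
    have hinvariant := isSemiInvariant_monomial w s (1 : K)
    rw [show (fun i => (s i : ℤ)) ᵥ* w = 0 from hcw] at hinvariant
    exact absurd (hinv _ hinvariant) (monomial_ne_C_coeff_zero hs one_ne_zero)

/-- (Lemma 1.1(i).) Over an infinite field, if every invariant polynomial (semi-invariant
of weight `0` for the diagonal torus action with weight matrix `w`) is constant, then
there exists a one-parameter subgroup `λ` against which all the weights are strictly
positive. -/
theorem exists_positive_one_parameter_subgroup (K : Type*) [Field K] [Infinite K]
    (m r : ℕ) (hm : 0 < m) (hr : 0 < r) (w : Fin m → (Fin r → ℤ))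
    (hinv : ∀ f : MvPolynomial (Fin m) K,
      (∀ (t : Fin r → Kˣ) (x : Fin m → K),
        MvPolynomial.eval (fun i => ((∏ j, (t j) ^ (w i j) : Kˣ) : K) * x i) f
          = ((∏ j, (t j) ^ ((0 : Fin r → ℤ) j) : Kˣ) : K) * MvPolynomial.eval x f) →
      f = MvPolynomial.C (MvPolynomial.coeff 0 f)) :
    ∃ lam : Fin r → ℤ, ∀ i : Fin m, (∑ j, w i j * lam j) > 0 :=
  exists_positive_one_parameter_subgroup_general K m r w hinv
end

section
/- (Claim in the proof of Theorem 1.5: surjections can absorb automorphisms of the target.) Let K be a field, let V and W be K-vector spaces, let A : V →ₗ[K] W be a surjective linear map, and let g : W ≃ₗ[K] W be a linear automorphism of W. Then there exists a linear automorphism h : V ≃ₗ[K] V such that A ∘ h = g ∘ A as linear maps from V to W, i.e. A (h v) = g (A v) for all v ∈ V. -/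
/-!
Choosing a complement of `ker A` identifies `V` with `ker A × W` in such a way that `A` becomes
the second projection; then `h` is the automorphism `id × g` transported along this
identification.
-/

namespace LinearMap

theorem exists_linearEquiv_semiconj_of_equiv_prod {R P V W : Type*} [Semiring R]
    [AddCommMonoid P] [AddCommMonoid V] [AddCommMonoid W] [Module R P] [Module R V] [Module R W]
    (A : V →ₗ[R] W) (e : V ≃ₗ[R] P × W) (he : ∀ v, (e v).2 = A v) (g : W ≃ₗ[R] W) :
    ∃ h : V ≃ₗ[R] V, ∀ v, A (h v) = g (A v) :=
  ⟨e.trans (((LinearEquiv.refl R P).prodCongr g).trans e.symm), fun v => by simp [← he]⟩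

theorem exists_equiv_ker_prod_of_surjective {K V W : Type*} [DivisionRing K]
    [AddCommGroup V] [Module K V] [AddCommGroup W] [Module K W]
    (A : V →ₗ[K] W) (hA : Function.Surjective A) :
    ∃ e : V ≃ₗ[K] ker A × W, ∀ v, (e v).2 = A v := by
  obtain ⟨C, hC⟩ := (ker A).exists_isCompl
  have hker : IsCompl (ker ((ker A).projectionOnto C hC)) (ker A) := by
    rw [Submodule.ker_projectionOnto]
    exact hC.symm
  exact ⟨equivProdOfSurjectiveOfIsCompl _ A (Submodule.range_projectionOnto hC)
    (range_eq_top.2 hA) hker, fun _ => rfl⟩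

end LinearMap

/-- (Claim in the proof of Theorem 1.5: surjections absorb automorphisms of the target.)
For a surjective linear map `A : V →ₗ[K] W` and an automorphism `g` of `W`, there is
an automorphism `h` of `V` with `A ∘ h = g ∘ A`. -/
theorem surjective_absorbs_automorphism (K : Type*) [Field K]
    (V W : Type*) [AddCommGroup V] [Module K V] [AddCommGroup W] [Module K W]
    (A : V →ₗ[K] W) (hA : Function.Surjective A) (g : W ≃ₗ[K] W) :
    ∃ h : V ≃ₗ[K] V, ∀ v : V, A (h v) = g (A v) := by
  obtain ⟨e, he⟩ := A.exists_equiv_ker_prod_of_surjective hA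
  exact A.exists_linearEquiv_semiconj_of_equiv_prod e he g
end

section
/- (Torus form of the mechanism of Theorem 2.8(ii): weights that are negative against the fixed positive functional carry no semi-invariants.) Assume K is an infinite field. Let u : Fin r → ℝ be such that ∑ j, (w i j : ℝ) * u j > 0 for every i : Fin m, and let ε : Fin r → ℤ satisfy ∑ j, (ε j : ℝ) * u j < 0. Then every semi-invariant f ∈ MvPolynomial (Fin m) K of weight ε is the zero polynomial. -/
open MvPolynomial

-- exponent injectivity over infinite field
lemma zpow_inj_exp {K : Type*} [Field K] [Infinite K] {A B : ℤ}
    (h : ∀ s : Kˣ, s ^ A = s ^ B) : A = B := by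
  by_contra hne
  have hn : A - B ≠ 0 := sub_ne_zero.mpr hne
  set N := (A - B).natAbs with hN
  have hN0 : N ≠ 0 := Int.natAbs_ne_zero.mpr hn
  have key : ∀ s : Kˣ, s ^ (N : ℕ) = 1 := by
    intro s
    have h1 : s ^ (A - B) = 1 := by
      rw [zpow_sub, h s, mul_inv_cancel]
    rcases Int.natAbs_eq (A - B) with he | he
    · rw [← zpow_natCast, ← he, h1]
    · rw [← zpow_natCast]
      have : s ^ (-(N : ℤ)) = 1 := by rw [← he, h1]
      rw [zpow_neg] at this
      exact inv_eq_one.mp this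
  have hroots : {x : K | (Polynomial.X ^ N - 1 : Polynomial K).IsRoot x}.Infinite := by
    apply Set.Infinite.mono (s := {x : K | x ≠ 0})
    · intro x hx
      have := key (Units.mk0 x hx)
      have hx1 : x ^ N = 1 := by
        have := congrArg Units.val this
        simpa using this
      simp [Polynomial.IsRoot, hx1]
    · have h01 : ({0} : Set K).Finite := Set.finite_singleton 0
      exact h01.infinite_compl
  exact hroots (Polynomial.finite_setOf_isRoot (by
    intro h0
    have := congrArg (Polynomial.coeff · N) h0
    simp [Polynomial.coeff_X_pow, hN0, Polynomial.coeff_one, hN0.symm] at this))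

lemma zpow_sum' {G : Type*} [CommGroup G] (s : G) {ι : Type*} (t : Finset ι) (k : ι → ℤ) :
    ∏ i ∈ t, s ^ k i = s ^ (∑ i ∈ t, k i) := by
  induction t using Finset.cons_induction with
  | empty => simp
  | cons a t ha ih => simp [Finset.prod_cons, Finset.sum_cons, ih, zpow_add]

/-- (Torus form of the mechanism of Theorem 2.8(ii).) Over an infinite field, a weight
which is negative against a functional that is positive on all the torus weights
carries no nonzero semi-invariants. -/
theorem semiinvariant_of_negative_weight_eq_zero (K : Type*) [Field K] [Infinite K]
    (m r : ℕ) (hm : 0 < m) (hr : 0 < r) (w : Fin m → (Fin r → ℤ))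
    (u : Fin r → ℝ) (hu : ∀ i : Fin m, (∑ j, (w i j : ℝ) * u j) > 0)
    (ε : Fin r → ℤ) (hε : (∑ j, (ε j : ℝ) * u j) < 0)
    (f : MvPolynomial (Fin m) K)
    (hf : ∀ (t : Fin r → Kˣ) (x : Fin m → K),
      MvPolynomial.eval (fun i => ((∏ j, (t j) ^ (w i j) : Kˣ) : K) * x i) f
        = ((∏ j, (t j) ^ (ε j) : Kˣ) : K) * MvPolynomial.eval x f) :
    f = 0 := by
  by_contra hf0
  obtain ⟨d, hd⟩ := MvPolynomial.support_nonempty.mpr hf0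
  have hcoeff : f.coeff d ≠ 0 := MvPolynomial.mem_support_iff.mp hd
  -- Step A: for every t, the d-weight of t equals the ε-weight of t
  have keyA : ∀ t : Fin r → Kˣ,
      (∏ i, ((∏ j, (t j) ^ (w i j) : Kˣ) : K) ^ (d i))
        = ((∏ j, (t j) ^ (ε j) : Kˣ) : K) := by
    intro t
    set c : Fin m → K := fun i => ((∏ j, (t j) ^ (w i j) : Kˣ) : K) with hc
    set a : K := ((∏ j, (t j) ^ (ε j) : Kˣ) : K) with ha
    set g : MvPolynomial (Fin m) K :=
      ∑ e ∈ f.support, MvPolynomial.monomial e ((∏ i, c i ^ e i) * f.coeff e) with hg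
    have hgf : g = MvPolynomial.C a * f := by
      apply MvPolynomial.funext
      intro x
      have h1 : MvPolynomial.eval x g
          = ∑ e ∈ f.support, ((∏ i, c i ^ e i) * f.coeff e) * ∏ i, x i ^ e i := by
        rw [hg, map_sum]
        refine Finset.sum_congr rfl fun e _ => ?_
        rw [MvPolynomial.eval_monomial, Finsupp.prod_pow]
      have h2 : MvPolynomial.eval (fun i => c i * x i) f
          = ∑ e ∈ f.support, ((∏ i, c i ^ e i) * f.coeff e) * ∏ i, x i ^ e i := by
        rw [MvPolynomial.eval_eq']
        refine Finset.sum_congr rfl fun e _ => ?_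
        rw [mul_comm (∏ i, c i ^ e i) (f.coeff e), mul_assoc, ← Finset.prod_mul_distrib]
        simp [mul_pow]
      rw [h1, ← h2, hf t x, map_mul, MvPolynomial.eval_C]
    have := congrArg (MvPolynomial.coeff d) hgf
    rw [hg, MvPolynomial.coeff_sum] at this
    simp only [MvPolynomial.coeff_monomial, MvPolynomial.coeff_C_mul] at this
    rw [Finset.sum_ite_eq' f.support d (fun e => (∏ i, c i ^ e i) * f.coeff e), if_pos hd] at this
    exact mul_right_cancel₀ hcoeff this
  have keyA' : ∀ t : Fin r → Kˣ,
      (∏ i, (∏ j, (t j) ^ (w i j)) ^ (d i) : Kˣ) = ∏ j, (t j) ^ (ε j) := by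
    intro t
    apply Units.ext
    rw [show ((∏ i, (∏ j, (t j) ^ (w i j)) ^ (d i) : Kˣ) : K)
        = (Units.coeHom K) (∏ i, (∏ j, (t j) ^ (w i j)) ^ (d i)) from rfl,
      show ((∏ j, (t j) ^ (ε j) : Kˣ) : K) = (Units.coeHom K) (∏ j, (t j) ^ (ε j)) from rfl,
      map_prod (Units.coeHom K)]
    simpa using keyA t
  -- Step B: componentwise integer identity
  have keyB : ∀ j0 : Fin r, (∑ i, (w i j0) * (d i : ℤ)) = ε j0 := by
    intro j0
    apply zpow_inj_exp (K := K)
    intro s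
    have h := keyA' (fun j => if j = j0 then s else 1)
    have hL : ∀ i : Fin m, (∏ j, (if j = j0 then s else 1) ^ (w i j)) = s ^ (w i j0) := by
      intro i
      rw [Finset.prod_eq_single j0]
      · simp
      · intro b _ hb; simp [hb]
      · simp
    have hR : (∏ j, (if j = j0 then s else 1) ^ (ε j)) = s ^ (ε j0) := by
      rw [Finset.prod_eq_single j0]
      · simp
      · intro b _ hb; simp [hb]
      · simp
    simp only [hL, hR] at h
    rw [← h, ← zpow_sum']
    refine Finset.prod_congr rfl fun i _ => ?_
    rw [← zpow_natCast (s ^ (w i j0)) (d i), ← zpow_mul]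
  -- Step C: contradiction with the real functional
  have hnonneg : (0:ℝ) ≤ ∑ j, (ε j : ℝ) * u j := by
    have hcast : ∀ j, (ε j : ℝ) = ∑ i, (w i j : ℝ) * (d i : ℝ) := by
      intro j
      rw [← keyB j]
      push_cast
      rfl
    calc (0:ℝ) ≤ ∑ i, (d i : ℝ) * (∑ j, (w i j : ℝ) * u j) :=
          Finset.sum_nonneg fun i _ => mul_nonneg (by positivity) (le_of_lt (hu i))
      _ = ∑ j, (ε j : ℝ) * u j := by
          simp_rw [hcast, Finset.mul_sum, Finset.sum_mul]
          rw [Finset.sum_comm]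
          refine Finset.sum_congr rfl fun j _ => Finset.sum_congr rfl fun i _ => by ring
  linarith
end
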